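/- arXiv:2512.07028 — 2 statements merged into one kernel-verified Lean document; each statement's English description precedes it below -/
import Mathlib

section
/- Let x, y > 0 satisfy |x-y|/(2(1+√(xy))) < 1. Then ln G⋆(x,y) = ∑_{k=1}^∞ (1/k)((x-y)/2)^{2k} ζ(2k, 1+(x+y)/2), i.e., the partial sums S_m converge to ln G⋆(x,y) as m → ∞. -/
/-- Hurwitz zeta at positive even integer arguments, as a real series. -/
noncomputable def hurwitzZetaNat (s : ℕ) (a : ℝ) : ℝ := ∑' m : ℕ, 1 / ((m : ℝ) + a) ^ s

/-!
With `c = (a + b) / 2` and `t = (a - b) / 2` we have `(a + j) * (b + j) = (c + j) ^ 2 - t ^ 2`, so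
Euler's limit formula for `Γ` writes `Γ a * Γ b / Γ c ^ 2` as the infinite product of the factors
`(1 - t ^ 2 / (c + j) ^ 2)⁻¹`. Taking logarithms and expanding each `-log (1 - t ^ 2 / (c + j) ^ 2)`
as a power series in `t ^ 2 / (c + j) ^ 2` gives a double series of nonnegative terms; summing it
over `j` first produces the Hurwitz zeta values `ζ (2k, c)`.
-/

open Real Filter Topology Finset

theorem GammaSeq_mul_GammaSeq_div_sq {a b : ℝ} (ha : 0 < a) (hb : 0 < b) {n : ℕ} (hn : n ≠ 0) :
    GammaSeq a n * GammaSeq b n / GammaSeq ((a + b) / 2) n ^ 2 =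
      ∏ j ∈ range (n + 1), ((a + b) / 2 + j) ^ 2 / ((a + j) * (b + j)) := by
  have hn' : (0 : ℝ) < n := by positivity
  have hpow : (n : ℝ) ^ a * (n : ℝ) ^ b = ((n : ℝ) ^ ((a + b) / 2)) ^ 2 := by
    rw [← rpow_add hn', ← rpow_natCast, ← rpow_mul hn'.le]
    ring_nf
  have hPa : 0 < ∏ j ∈ range (n + 1), (a + j) := prod_pos fun j _ => by positivity
  have hPb : 0 < ∏ j ∈ range (n + 1), (b + j) := prod_pos fun j _ => by positivity
  have hPc : 0 < ∏ j ∈ range (n + 1), ((a + b) / 2 + j) := prod_pos fun j _ => by positivity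
  have hnc : 0 < (n : ℝ) ^ ((a + b) / 2) := by positivity
  rw [prod_div_distrib, prod_mul_distrib, prod_pow]
  simp only [GammaSeq]
  field_simp
  linear_combination hpow

theorem hasSum_of_hasSum_fiberwise_of_nonneg {α β : Type*} {f : α → β → ℝ} (hf : ∀ i j, 0 ≤ f i j)
    {g : α → ℝ} {L : ℝ} (hfg : ∀ i, HasSum (f i) (g i)) (hg : HasSum g L) :
    HasSum (fun j => ∑' i, f i j) L := by
  have hs : Summable (Function.uncurry f) :=
    (summable_prod_of_nonneg fun p => hf p.1 p.2).2
      ⟨fun i => (hfg i).summable, hg.summable.congr fun i => ((hfg i).tsum_eq).symm⟩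
  have hL : ∑' i, ∑' j, f i j = L := (tsum_congr fun i => (hfg i).tsum_eq).trans hg.tsum_eq
  rw [← hL, ← hs.tsum_comm]
  exact hs.prod_symm.prod.hasSum

theorem hasSum_log_sq_div_sq_sub_sq {t u : ℝ} (h : |t| < |u|) :
    HasSum (fun k : ℕ => (t ^ 2 / u ^ 2) ^ (k + 1) / (k + 1)) (log (u ^ 2 / (u ^ 2 - t ^ 2))) := by
  have hsq : t ^ 2 < u ^ 2 := sq_lt_sq.2 h
  have hu : 0 < u ^ 2 := by nlinarith [sq_nonneg t]
  have hr : |t ^ 2 / u ^ 2| < 1 := by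
    rw [abs_of_nonneg (by positivity), div_lt_one hu]
    exact hsq
  convert hasSum_pow_div_log_of_abs_lt_one hr using 1
  rw [← log_inv, one_sub_div hu.ne', inv_div]

theorem hasSum_log_Gamma_mul_Gamma_div_sq {a b : ℝ} (ha : 0 < a) (hb : 0 < b) :
    HasSum (fun j : ℕ => log (((a + b) / 2 + j) ^ 2 / ((a + j) * (b + j))))
      (log (Gamma a * Gamma b / Gamma ((a + b) / 2) ^ 2)) := by
  have hterm_nonneg : ∀ j : ℕ, 0 ≤ log (((a + b) / 2 + j) ^ 2 / ((a + j) * (b + j))) := by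
    intro j
    have hab : (a + j) * (b + j) ≤ ((a + b) / 2 + j) ^ 2 := by nlinarith [sq_nonneg (a - b)]
    exact log_nonneg ((one_le_div (by positivity)).2 hab)
  have hΓa := Gamma_pos_of_pos ha
  have hΓb := Gamma_pos_of_pos hb
  have hΓc : 0 < Gamma ((a + b) / 2) := Gamma_pos_of_pos (by positivity)
  have hlim : Tendsto (fun n => GammaSeq a n * GammaSeq b n / GammaSeq ((a + b) / 2) n ^ 2)
      atTop (𝓝 (Gamma a * Gamma b / Gamma ((a + b) / 2) ^ 2)) :=
    ((GammaSeq_tendsto_Gamma a).mul (GammaSeq_tendsto_Gamma b)).div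
      ((GammaSeq_tendsto_Gamma _).pow 2) (by positivity)
  rw [hasSum_iff_tendsto_nat_of_nonneg hterm_nonneg, ← tendsto_add_atTop_iff_nat 1]
  refine ((continuousAt_log (by positivity)).tendsto.comp hlim).congr' ?_
  filter_upwards [eventually_ne_atTop 0] with n hn
  rw [Function.comp_apply, GammaSeq_mul_GammaSeq_div_sq ha hb hn, log_prod]
  intro j _
  positivity

theorem log_Gamma_mul_Gamma_div_sq_eq_tsum {a b : ℝ} (ha : 0 < a) (hb : 0 < b) :
    log (Gamma a * Gamma b / Gamma ((a + b) / 2) ^ 2) =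
      ∑' k : ℕ, (1 / ((k : ℝ) + 1)) * ((a - b) / 2) ^ (2 * (k + 1)) *
        hurwitzZetaNat (2 * (k + 1)) ((a + b) / 2) := by
  set t := (a - b) / 2 with ht
  set c := (a + b) / 2 with hc
  have hexpand : ∀ n : ℕ, HasSum (fun k : ℕ => (t ^ 2 / (c + n) ^ 2) ^ (k + 1) / (k + 1))
      (log ((c + n) ^ 2 / ((a + n) * (b + n)))) := by
    intro n
    have h : |t| < |c + n| := by
      rw [abs_of_pos (by positivity : (0 : ℝ) < c + n), abs_lt, ht, hc]
      constructor <;> linarith [(Nat.cast_nonneg n : (0 : ℝ) ≤ n)]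
    convert hasSum_log_sq_div_sq_sub_sq h using 3
    rw [ht, hc]
    ring
  have hswap := hasSum_of_hasSum_fiberwise_of_nonneg (fun n k => by positivity) hexpand
    (hasSum_log_Gamma_mul_Gamma_div_sq ha hb)
  refine hswap.tsum_eq.symm.trans (tsum_congr fun k => ?_)
  rw [hurwitzZetaNat, ← tsum_mul_left]
  refine tsum_congr fun n => ?_
  rw [div_pow, ← pow_mul, ← pow_mul]
  ring

theorem log_gurland_star_series_general (x y : ℝ) (hx : 0 < x) (hy : 0 < y) :
    Real.log (Real.Gamma (1 + x) * Real.Gamma (1 + y) /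
        (Real.Gamma (1 + (x + y) / 2)) ^ 2) =
      ∑' k : ℕ, (1 / ((k : ℝ) + 1)) * ((x - y) / 2) ^ (2 * (k + 1)) *
        hurwitzZetaNat (2 * (k + 1)) (1 + (x + y) / 2) := by
  have h := log_Gamma_mul_Gamma_div_sq_eq_tsum (a := 1 + x) (b := 1 + y) (by linarith) (by linarith)
  rwa [show (1 + x + (1 + y)) / 2 = 1 + (x + y) / 2 by ring,
    show (1 + x - (1 + y)) / 2 = (x - y) / 2 by ring] at h

theorem log_gurland_star_series (x y : ℝ) (hx : 0 < x) (hy : 0 < y)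
    (hQ : |x - y| / (2 * (1 + Real.sqrt (x * y))) < 1) :
    Real.log (Real.Gamma (1 + x) * Real.Gamma (1 + y) /
        (Real.Gamma (1 + (x + y) / 2)) ^ 2) =
      ∑' k : ℕ, (1 / ((k : ℝ) + 1)) * ((x - y) / 2) ^ (2 * (k + 1)) *
        hurwitzZetaNat (2 * (k + 1)) (1 + (x + y) / 2) :=
  log_gurland_star_series_general x y hx hy
end

section
/- For all x, y > 0, the classical Gurland ratio satisfies Γ(x)Γ(y)/Γ((x+y)/2)² ≥ ((x+y)²/(4xy)) · exp(((x-y)/2)² ζ(2, 1+(x+y)/2)). -/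
/-!
Euler's limit formula writes `Γ(x)Γ(y)/Γ(m)²`, with `m = (x+y)/2`, as the limit of the partial
products of `∏_{j ≥ 0} (m+j)² / ((x+j)(y+j))`. The factor `j = 0` is `(x+y)²/(4xy)`. For the
others put `a = x+j`, `b = y+j`: then `(m+j)² / (ab) = 1/(1-u)` with `u = ((x-y)/2)²/(m+j)² < 1`,
and `1/(1-u) ≥ eᵘ`; multiplying these bounds gives the exponential of `((x-y)/2)² ζ(2, 1+m)`.
-/

open Filter Finset Topology

namespace Real

lemma exp_sq_div_sq_le_sq_div_mul {a b : ℝ} (ha : 0 < a) (hb : 0 < b) :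
    exp (((a - b) / 2) ^ 2 / ((a + b) / 2) ^ 2) ≤ ((a + b) / 2) ^ 2 / (a * b) := by
  have hu : ((a - b) / 2) ^ 2 / ((a + b) / 2) ^ 2 < 1 := by
    rw [div_lt_one (by positivity)]
    nlinarith [mul_pos ha hb]
  calc exp (((a - b) / 2) ^ 2 / ((a + b) / 2) ^ 2)
      ≤ 1 / (1 - ((a - b) / 2) ^ 2 / ((a + b) / 2) ^ 2) :=
        exp_bound_div_one_sub_of_interval (by positivity) hu
    _ = ((a + b) / 2) ^ 2 / (a * b) := by
        rw [one_sub_div (by positivity), one_div_div]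
        congr 1
        ring

lemma summable_one_div_nat_add_sq (a : ℝ) :
    Summable fun n : ℕ => 1 / ((n : ℝ) + a) ^ 2 := by
  refine ((summable_one_div_nat_add_rpow a 2).mpr one_lt_two).congr fun n => ?_
  rw [rpow_two, sq_abs]

lemma GammaSeq_mul_GammaSeq_div_sq {x y : ℝ} (hx : 0 < x) (hy : 0 < y) {n : ℕ} (hn : n ≠ 0) :
    GammaSeq x n * GammaSeq y n / GammaSeq ((x + y) / 2) n ^ 2 =
      ∏ j ∈ range (n + 1), ((x + y) / 2 + j) ^ 2 / ((x + j) * (y + j)) := by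
  have hn0 : (0 : ℝ) < n := by positivity
  have hrpow : (n : ℝ) ^ x * (n : ℝ) ^ y = ((n : ℝ) ^ ((x + y) / 2)) ^ 2 := by
    rw [← rpow_natCast _ 2, ← rpow_mul hn0.le, ← rpow_add hn0]
    ring_nf
  have hx' : ∏ j ∈ range (n + 1), (x + (j : ℝ)) ≠ 0 := prod_ne_zero_iff.mpr fun j _ => by positivity
  have hy' : ∏ j ∈ range (n + 1), (y + (j : ℝ)) ≠ 0 := prod_ne_zero_iff.mpr fun j _ => by positivity
  have hm' : ∏ j ∈ range (n + 1), ((x + y) / 2 + (j : ℝ)) ≠ 0 :=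
    prod_ne_zero_iff.mpr fun j _ => by positivity
  have hnm : (n : ℝ) ^ ((x + y) / 2) ≠ 0 := (rpow_pos_of_pos hn0 _).ne'
  rw [prod_div_distrib, prod_pow, prod_mul_distrib]
  simp only [GammaSeq]
  rw [div_pow, div_mul_div_comm, div_div_div_eq, mul_pow, ← hrpow]
  field_simp

lemma tendsto_prod_sq_div_mul_Gamma {x y : ℝ} (hx : 0 < x) (hy : 0 < y) :
    Tendsto (fun n : ℕ => ∏ j ∈ range (n + 1), ((x + y) / 2 + j) ^ 2 / ((x + j) * (y + j)))
      atTop (𝓝 (Gamma x * Gamma y / Gamma ((x + y) / 2) ^ 2)) := by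
  have hm : Gamma ((x + y) / 2) ^ 2 ≠ 0 := (pow_pos (Gamma_pos_of_pos (by positivity)) 2).ne'
  refine (((GammaSeq_tendsto_Gamma x).mul (GammaSeq_tendsto_Gamma y)).div
    ((GammaSeq_tendsto_Gamma _).pow 2) hm).congr' ?_
  filter_upwards [eventually_ne_atTop 0] with n hn
  exact GammaSeq_mul_GammaSeq_div_sq hx hy hn

lemma exp_mul_sum_le_prod_sq_div_mul {x y : ℝ} (hx : 0 < x) (hy : 0 < y) (n : ℕ) :
    exp (((x - y) / 2) ^ 2 * ∑ j ∈ range n, 1 / ((j : ℝ) + (1 + (x + y) / 2)) ^ 2) ≤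
      ∏ j ∈ range n, ((x + y) / 2 + (j + 1 : ℕ)) ^ 2 / ((x + (j + 1 : ℕ)) * (y + (j + 1 : ℕ))) := by
  rw [mul_sum, exp_sum]
  refine prod_le_prod (fun j _ => (exp_pos _).le) fun j _ => ?_
  have h := exp_sq_div_sq_le_sq_div_mul (a := x + (j + 1 : ℕ)) (b := y + (j + 1 : ℕ))
    (by positivity) (by positivity)
  have hdiff : x + (j + 1 : ℕ) - (y + (j + 1 : ℕ)) = x - y := by ring
  have hmid : (x + (j + 1 : ℕ) + (y + (j + 1 : ℕ))) / 2 = (x + y) / 2 + (j + 1 : ℕ) := by ring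
  rw [hdiff, hmid] at h
  refine le_of_eq_of_le ?_ h
  push_cast
  ring_nf

end Real

open Real in
theorem gurland_ratio_lower_bound (x y : ℝ) (hx : 0 < x) (hy : 0 < y) :
    Real.Gamma x * Real.Gamma y / (Real.Gamma ((x + y) / 2)) ^ 2 ≥
      ((x + y) ^ 2 / (4 * x * y)) *
        Real.exp (((x - y) / 2) ^ 2 *
          ∑' n : ℕ, 1 / ((n : ℝ) + (1 + (x + y) / 2)) ^ 2) := by
  have hsum := summable_one_div_nat_add_sq (1 + (x + y) / 2)
  have hfirst : ((x + y) / 2 + (0 : ℕ)) ^ 2 / ((x + (0 : ℕ)) * (y + (0 : ℕ))) =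
      (x + y) ^ 2 / (4 * x * y) := by
    field_simp
    ring
  refine le_of_tendsto_of_tendsto' (tendsto_const_nhds.mul ((continuous_exp.tendsto _).comp
    (tendsto_const_nhds.mul hsum.hasSum.tendsto_sum_nat))) (tendsto_prod_sq_div_mul_Gamma hx hy)
    fun n => ?_
  rw [prod_range_succ', hfirst, mul_comm]
  gcongr
  exact exp_mul_sum_le_prod_sq_div_mul hx hy n
end
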